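/- arXiv:0705.0909 — 5 statements merged into one kernel-verified Lean document; each statement's English description precedes it below -/
import Mathlib

section
/- Let f : [0,∞) → [0,1) be continuously differentiable, strictly increasing, with f(0) = 0, f'(0) = 0, f(γ) → 1 as γ → ∞, and S-shaped (convex then concave). Then for any Γ > 0, the equation γ(1 - γ/Γ) f'(γ) = f(γ) has a solution γ* satisfying 0 < γ* < Γ. -/
open Real Set Filter Topology

/-!
Put `H x = f x / x * (Γ - x)`. It tends to `0` at `0⁺` (because `f 0 = f' 0 = 0`) and at `Γ⁻`,
so by Rolle's theorem `H' c = 0` for some `c ∈ (0, Γ)`, and `c² H' c = c (Γ - c) f' c - Γ f c`.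
-/

theorem HasDerivAt.tendsto_div_self_of_apply_zero {f : ℝ → ℝ} {f' : ℝ} (hf : HasDerivAt f f' 0)
    (h0 : f 0 = 0) : Tendsto (fun x => f x / x) (𝓝[≠] 0) (𝓝 f') := by
  simpa [h0, div_eq_inv_mul] using hasDerivAt_iff_tendsto_slope_zero.mp hf

theorem exists_mem_Ioo_mul_one_sub_div_mul_eq {f f' : ℝ → ℝ} {Γ : ℝ} (hΓ : 0 < Γ)
    (hf : ∀ x ∈ Ioo 0 Γ, HasDerivAt f (f' x) x) (hfΓ : ContinuousWithinAt f (Iio Γ) Γ)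
    (hf0 : Tendsto (fun x => f x / x) (𝓝[>] 0) (𝓝 0)) :
    ∃ c ∈ Ioo 0 Γ, c * (1 - c / Γ) * f' c = f c := by
  set H : ℝ → ℝ := fun x => f x / x * (Γ - x)
  have hH0 : Tendsto H (𝓝[>] 0) (𝓝 0) := by
    have hsub : Tendsto (fun x : ℝ => Γ - x) (𝓝[>] 0) (𝓝 (Γ - 0)) :=
      ((continuous_const.sub continuous_id).tendsto 0).mono_left nhdsWithin_le_nhds
    simpa using hf0.mul hsub
  have hHΓ : Tendsto H (𝓝[<] Γ) (𝓝 0) := by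
    have hsub : Tendsto (fun x : ℝ => Γ - x) (𝓝[<] Γ) (𝓝 (Γ - Γ)) :=
      ((continuous_const.sub continuous_id).tendsto Γ).mono_left nhdsWithin_le_nhds
    simpa using (hfΓ.tendsto.div (tendsto_nhdsWithin_of_tendsto_nhds tendsto_id) hΓ.ne').mul hsub
  have hH' : ∀ x ∈ Ioo 0 Γ, HasDerivAt H
      ((f' x * x - f x * 1) / x ^ 2 * (Γ - x) + f x / x * (0 - 1)) x := fun x hx =>
    (((hf x hx).div (hasDerivAt_id x) hx.1.ne').mul ((hasDerivAt_const x Γ).sub (hasDerivAt_id x)))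
  obtain ⟨c, hc, hH'c⟩ := exists_hasDerivAt_eq_zero' hΓ hH0 hHΓ hH'
  refine ⟨c, hc, ?_⟩
  have hc0 : c ≠ 0 := hc.1.ne'
  field_simp at hH'c ⊢
  linarith

theorem exists_equilibrium_sinr_general
    (f : ℝ → ℝ)
    (hC1 : ContDiff ℝ 1 f)
    (h0 : f 0 = 0)
    (hd0 : deriv f 0 = 0)
    (Γ : ℝ) (hΓ : 0 < Γ) :
    ∃ γstar : ℝ, 0 < γstar ∧ γstar < Γ ∧
      γstar * (1 - γstar / Γ) * deriv f γstar = f γstar := by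
  have hd : Differentiable ℝ f := hC1.differentiable one_ne_zero
  have hf0 : Tendsto (fun x => f x / x) (𝓝[>] 0) (𝓝 0) := by
    have := (hd 0).hasDerivAt.tendsto_div_self_of_apply_zero h0
    rw [hd0] at this
    exact this.mono_left (nhdsWithin_mono _ fun x hx => ne_of_gt hx)
  obtain ⟨c, hc, heq⟩ := exists_mem_Ioo_mul_one_sub_div_mul_eq hΓ (fun x _ => (hd x).hasDerivAt)
    (hd Γ).continuousAt.continuousWithinAt hf0
  exact ⟨c, hc.1, hc.2, heq⟩

/-- Existence of the utility-maximizing SINR: for an efficiency function `f`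
(continuously differentiable, strictly increasing, `f 0 = 0`, `f' 0 = 0`,
`f → 1` at infinity, values in `[0,1)`, S-shaped) and any `Γ > 0`, the equation
`γ (1 - γ/Γ) f'(γ) = f γ` has a solution `γ*` with `0 < γ* < Γ`. -/
theorem exists_equilibrium_sinr
    (f : ℝ → ℝ)
    (hC1 : ContDiff ℝ 1 f)
    (hmono : StrictMonoOn f (Ici 0))
    (h0 : f 0 = 0)
    (hd0 : deriv f 0 = 0)
    (hlim : Tendsto f atTop (nhds 1))
    (hrange : ∀ γ : ℝ, 0 ≤ γ → 0 ≤ f γ ∧ f γ < 1)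
    (hS : ∃ γ₀ : ℝ, 0 < γ₀ ∧ ConvexOn ℝ (Icc 0 γ₀) f ∧ ConcaveOn ℝ (Ici γ₀) f)
    (Γ : ℝ) (hΓ : 0 < Γ) :
    ∃ γstar : ℝ, 0 < γstar ∧ γstar < Γ ∧
      γstar * (1 - γstar / Γ) * deriv f γstar = f γstar :=
  exists_equilibrium_sinr_general f hC1 h0 hd0 Γ hΓ
end

section
/- Let K ≥ 1, and for k = 1,…,K let γ_k* > 0, Γ_k > 0, σ² > 0, h_k^{SP} > 0, and h_{kj} ≥ 0 for j ≠ k. Suppose the powers p_k > 0 satisfy the fixed-point equations p_k = γ_k*(Σ_{j≠k} h_{kj} p_j + σ²) / (h_k^{SP}(1 - γ_k*/Γ_k)) for all k, with γ_k* < Γ_k. If additionally h_k^{SP} p_k = q for all k (a common constant q > 0), then q[1 - γ_k*(Γ_k^{-1} + X_k^{-1})] = σ² γ_k* for each k, where X_k^{-1} = Σ_{j≠k} h_{kj}/h_j^{SP}; consequently γ_k*(Γ_k^{-1} + X_k^{-1}) < 1. -/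
open Finset

/-! When every received power `h_j^{SP} p_j` equals `q`, each cross term `h_{kj} p_j` becomes
`q h_{kj} / h_j^{SP}`, so the interference is `q X_k⁻¹`. Clearing the denominator
`h_k^{SP} (1 - γ_k*/Γ_k)` in the fixed-point equation of user `k` and substituting
`h_k^{SP} p_k = q` leaves the linear identity `q (1 - γ_k*(Γ_k⁻¹ + X_k⁻¹)) = σ² γ_k*`, whose
right-hand side is positive. -/

theorem Finset.sum_mul_eq_mul_sum_div_of_forall_mul_eq {ι K : Type*} [Field K]
    (s : Finset ι) (a b c : ι → K) (q : K) (hb : ∀ j ∈ s, b j ≠ 0)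
    (hbc : ∀ j ∈ s, b j * c j = q) :
    ∑ j ∈ s, a j * c j = q * ∑ j ∈ s, a j / b j := by
  rw [Finset.mul_sum]
  refine Finset.sum_congr rfl fun j hj => ?_
  rw [← hbc j hj]
  field_simp [hb j hj]

theorem mul_one_sub_eq_of_eq_div_of_mul_eq {K : Type*} [Field K] {γ Γ g p q X σ2 : K}
    (hg : g ≠ 0) (hd : 1 - γ / Γ ≠ 0)
    (hfix : p = γ * (q * X + σ2) / (g * (1 - γ / Γ))) (hgp : g * p = q) :
    q * (1 - γ * (Γ⁻¹ + X)) = σ2 * γ := by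
  rw [eq_div_iff (mul_ne_zero hg hd)] at hfix
  linear_combination hfix - (1 - γ / Γ) * hgp

theorem nash_achievability_necessary_general
    (K : ℕ)
    (γstar Γ hSP p : Fin K → ℝ) (h : Fin K → Fin K → ℝ) (σ2 q : ℝ)
    (hσ : 0 < σ2) (hq : 0 < q)
    (hγ : ∀ k, 0 < γstar k) (hΓ : ∀ k, 0 < Γ k)
    (hhSP : ∀ k, 0 < hSP k)
    (hlt : ∀ k, γstar k < Γ k)
    (hfix : ∀ k, p k =
      γstar k * ((∑ j ∈ Finset.univ.erase k, h k j * p j) + σ2) /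
        (hSP k * (1 - γstar k / Γ k)))
    (hcommon : ∀ k, hSP k * p k = q) :
    ∀ k, q * (1 - γstar k * ((Γ k)⁻¹ +
        ∑ j ∈ Finset.univ.erase k, h k j / hSP j)) = σ2 * γstar k ∧
      γstar k * ((Γ k)⁻¹ + ∑ j ∈ Finset.univ.erase k, h k j / hSP j) < 1 := by
  intro k
  have hinterference := Finset.sum_mul_eq_mul_sum_div_of_forall_mul_eq (univ.erase k) (h k)
    hSP p q (fun j _ => (hhSP j).ne') (fun j _ => hcommon j)
  have hd : 1 - γstar k / Γ k ≠ 0 := (sub_pos.mpr ((div_lt_one (hΓ k)).mpr (hlt k))).ne'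
  have hmain := mul_one_sub_eq_of_eq_div_of_mul_eq (hhSP k).ne' hd
    (hinterference ▸ hfix k) (hcommon k)
  refine ⟨hmain, sub_pos.mp ((pos_iff_pos_of_mul_pos ?_).mp hq)⟩
  exact hmain ▸ mul_pos hσ (hγ k)

/-- Necessity direction of the achievability condition: if the powers solve the
Nash fixed-point equations and the received powers `h_k^{SP} p_k` are all equal
to a common `q > 0`, then `q (1 - γ_k*(Γ_k⁻¹ + X_k⁻¹)) = σ² γ_k*` for each `k`,
where `X_k⁻¹ = ∑_{j ≠ k} h_{kj}/h_j^{SP}`; consequently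
`γ_k*(Γ_k⁻¹ + X_k⁻¹) < 1`. -/
theorem nash_achievability_necessary
    (K : ℕ) (hK : 1 ≤ K)
    (γstar Γ hSP p : Fin K → ℝ) (h : Fin K → Fin K → ℝ) (σ2 q : ℝ)
    (hσ : 0 < σ2) (hq : 0 < q)
    (hγ : ∀ k, 0 < γstar k) (hΓ : ∀ k, 0 < Γ k)
    (hhSP : ∀ k, 0 < hSP k) (hp : ∀ k, 0 < p k)
    (hh : ∀ k j, j ≠ k → 0 ≤ h k j)
    (hlt : ∀ k, γstar k < Γ k)
    (hfix : ∀ k, p k =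
      γstar k * ((∑ j ∈ Finset.univ.erase k, h k j * p j) + σ2) /
        (hSP k * (1 - γstar k / Γ k)))
    (hcommon : ∀ k, hSP k * p k = q) :
    ∀ k, q * (1 - γstar k * ((Γ k)⁻¹ +
        ∑ j ∈ Finset.univ.erase k, h k j / hSP j)) = σ2 * γstar k ∧
      γstar k * ((Γ k)⁻¹ + ∑ j ∈ Finset.univ.erase k, h k j / hSP j) < 1 :=
  nash_achievability_necessary_general K γstar Γ hSP p h σ2 q hσ hq hγ hΓ hhSP hlt hfix hcommon
end

section
/- Under the hypotheses of the previous statement, the assignment p_k = (1/h_k^{SP}) · σ²γ_k*/(1 - γ_k*(Γ_k^{-1} + X_k^{-1})) is the minimal-power solution: for any other power vector (p_k') achieving γ_k(p') ≥ γ_k* for all k, one has inf_k h_k^{SP} p_k' ≥ q where q = σ²γ_k*/(1 - γ_k*(Γ_k^{-1} + X_k^{-1})). -/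
/-!
Let `k₀` be the user with the weakest received power `r = h^{SP} p'`. Every interferer `j` then
contributes `h_{k₀j} p'_j = (h_{k₀j}/h_j^{SP}) r_j ≥ (h_{k₀j}/h_j^{SP}) r_{k₀}`, so the SINR
constraint of `k₀` yields the scalar inequality `γ*((Γ⁻¹ + X⁻¹) r_{k₀} + σ²) ≤ r_{k₀}`, which
solves to `q ≤ r_{k₀}`. Minimality of `r_{k₀}` carries the bound to every user.
-/

open Finset

theorem div_one_sub_mul_le_of_mul_add_le {γ c σ2 r : ℝ} (hc : γ * c < 1)
    (h : γ * (c * r + σ2) ≤ r) : σ2 * γ / (1 - γ * c) ≤ r := by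
  rw [div_le_iff₀ (sub_pos.mpr hc)]
  linarith

section

variable {ι : Type*} [Fintype ι] [DecidableEq ι] {hSP p : ι → ℝ} {h : ι → ι → ℝ} {k : ι}

theorem sum_div_mul_le_sum_mul_of_forall_le (hhSP : ∀ j, 0 < hSP j)
    (hh : ∀ j, j ≠ k → 0 ≤ h k j) (hmin : ∀ j, hSP k * p k ≤ hSP j * p j) :
    (∑ j ∈ univ.erase k, h k j / hSP j) * (hSP k * p k) ≤ ∑ j ∈ univ.erase k, h k j * p j := by
  rw [sum_mul]
  refine sum_le_sum fun j hj => ?_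
  calc h k j / hSP j * (hSP k * p k)
      ≤ h k j / hSP j * (hSP j * p j) :=
        mul_le_mul_of_nonneg_left (hmin j) (div_nonneg (hh j (ne_of_mem_erase hj)) (hhSP j).le)
    _ = h k j * p j := by field_simp [(hhSP j).ne']

theorem le_received_power_of_sinr_ge_of_forall_le {γ Γ σ2 : ℝ} (hσ : 0 < σ2) (hγ : 0 < γ)
    (hΓ : 0 < Γ) (hhSP : ∀ j, 0 < hSP j) (hh : ∀ j, j ≠ k → 0 ≤ h k j) (hp : ∀ j, 0 ≤ p j)
    (hmin : ∀ j, hSP k * p k ≤ hSP j * p j)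
    (hcond : γ * (Γ⁻¹ + ∑ j ∈ univ.erase k, h k j / hSP j) < 1)
    (hach : γ ≤ hSP k * p k / ((hSP k / Γ) * p k + (∑ j ∈ univ.erase k, h k j * p j) + σ2)) :
    σ2 * γ / (1 - γ * (Γ⁻¹ + ∑ j ∈ univ.erase k, h k j / hSP j)) ≤ hSP k * p k := by
  refine div_one_sub_mul_le_of_mul_add_le hcond ?_
  have hself : (hSP k / Γ) * p k = Γ⁻¹ * (hSP k * p k) := by ring
  have hinterf := sum_div_mul_le_sum_mul_of_forall_le hhSP hh hmin
  have hD : 0 < (hSP k / Γ) * p k + (∑ j ∈ univ.erase k, h k j * p j) + σ2 := by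
    have := mul_nonneg (div_nonneg (hhSP k).le hΓ.le) (hp k)
    have : 0 ≤ ∑ j ∈ univ.erase k, h k j * p j :=
      sum_nonneg fun j hj => mul_nonneg (hh j (ne_of_mem_erase hj)) (hp j)
    linarith
  calc γ * ((Γ⁻¹ + ∑ j ∈ univ.erase k, h k j / hSP j) * (hSP k * p k) + σ2)
      ≤ γ * ((hSP k / Γ) * p k + (∑ j ∈ univ.erase k, h k j * p j) + σ2) := by
        gcongr
        linarith
    _ ≤ hSP k * p k := (le_div_iff₀ hD).mp hach

end

theorem minimal_power_solution_general
    (K : ℕ) (hK : 1 ≤ K)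
    (γstar Γ hSP : Fin K → ℝ) (h : Fin K → Fin K → ℝ) (σ2 q : ℝ)
    (hσ : 0 < σ2)
    (hγ : ∀ k, 0 < γstar k) (hΓ : ∀ k, 0 < Γ k)
    (hhSP : ∀ k, 0 < hSP k)
    (hh : ∀ k j, j ≠ k → 0 ≤ h k j)
    (hcond : ∀ k, γstar k * ((Γ k)⁻¹ +
        ∑ j ∈ Finset.univ.erase k, h k j / hSP j) < 1)
    (hqdef : ∀ k, q = σ2 * γstar k /
        (1 - γstar k * ((Γ k)⁻¹ + ∑ j ∈ Finset.univ.erase k, h k j / hSP j)))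
    (p' : Fin K → ℝ) (hp' : ∀ k, 0 ≤ p' k)
    (hach : ∀ k, γstar k ≤ hSP k * p' k /
        ((hSP k / Γ k) * p' k + (∑ j ∈ Finset.univ.erase k, h k j * p' j) + σ2)) :
    (∀ k, q ≤ hSP k * p' k) ∧ q ≤ ⨅ k, hSP k * p' k := by
  have : Nonempty (Fin K) := ⟨⟨0, hK⟩⟩
  obtain ⟨k₀, hmin⟩ := Finite.exists_min fun k => hSP k * p' k
  have hweakest : q ≤ hSP k₀ * p' k₀ := hqdef k₀ ▸
    le_received_power_of_sinr_ge_of_forall_le hσ (hγ k₀) (hΓ k₀) hhSP (hh k₀) hp' hmin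
      (hcond k₀) (hach k₀)
  have hall : ∀ k, q ≤ hSP k * p' k := fun k => hweakest.trans (hmin k)
  exact ⟨hall, le_ciInf hall⟩

/-- Minimality of the equal-received-power solution: if another nonnegative
power vector `p'` achieves `γ_k(p') ≥ γ_k*` for all `k`, then every received
power `h_k^{SP} p'_k` (hence their infimum) is at least
`q = σ²γ_k*/(1 - γ_k*(Γ_k⁻¹ + X_k⁻¹))`. -/
theorem minimal_power_solution
    (K : ℕ) (hK : 1 ≤ K)
    (γstar Γ hSP : Fin K → ℝ) (h : Fin K → Fin K → ℝ) (σ2 q : ℝ)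
    (hσ : 0 < σ2) (hq : 0 < q)
    (hγ : ∀ k, 0 < γstar k) (hΓ : ∀ k, 0 < Γ k)
    (hhSP : ∀ k, 0 < hSP k)
    (hh : ∀ k j, j ≠ k → 0 ≤ h k j)
    (hcond : ∀ k, γstar k * ((Γ k)⁻¹ +
        ∑ j ∈ Finset.univ.erase k, h k j / hSP j) < 1)
    (hqdef : ∀ k, q = σ2 * γstar k /
        (1 - γstar k * ((Γ k)⁻¹ + ∑ j ∈ Finset.univ.erase k, h k j / hSP j)))
    (p' : Fin K → ℝ) (hp' : ∀ k, 0 ≤ p' k)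
    (hach : ∀ k, γstar k ≤ hSP k * p' k /
        ((hSP k / Γ k) * p' k + (∑ j ∈ Finset.univ.erase k, h k j * p' j) + σ2)) :
    (∀ k, q ≤ hSP k * p' k) ∧ q ≤ ⨅ k, hSP k * p' k :=
  minimal_power_solution_general K hK γstar Γ hSP h σ2 q hσ hγ hΓ hhSP hh hcond hqdef p' hp' hach
end

section
/- Let f be an efficiency function (increasing, S-shaped, continuously differentiable, f(0)=0, f'(0)=0, f(∞)=1) and for Γ > 0 let Γ̂(Γ) denote the solution of γ(1 - γ/Γ)f'(γ) = f(γ) in (0, Γ). Then Γ̂ is monotonically increasing in Γ, and Γ̂(Γ) ≤ γ̄* for all Γ, where γ̄* is the solution of γ f'(γ) = f(γ) (the Γ = ∞ case). -/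
open Set Filter

/-!
Write `g(γ) = γ f'(γ) - f(γ)`. A solution `a = Γ̂(Γ)` has `g(a) = (a²/Γ) f'(a) > 0`, while
`g(γ̄*) = 0`. On the concave part of `f`, `g` is antitone, and `γ̄*` lies there: on the convex part
`g(γ) = 0` would force `f` to be linear on `[0, γ]`, contradicting `f'(0) = 0`. Hence `Γ̂ ≤ γ̄*`.

For monotonicity, if `Γ₁ < Γ₂` and `a = Γ̂(Γ₁)`, then `γ ↦ γ (1 - γ/Γ₂) f'(γ) - f(γ)` is positive
at `a` and equals `-f(Γ₂) < 0` at `Γ₂`, so it vanishes somewhere in `(a, Γ₂)`; by uniqueness that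
zero is `Γ̂(Γ₂)`.
-/

variable {f : ℝ → ℝ}

theorem ConcaveOn.antitoneOn_mul_deriv_sub {s : Set ℝ} (hf : ConcaveOn ℝ s f) (hs : s ⊆ Ici 0)
    (hd : ∀ x ∈ s, DifferentiableAt ℝ f x) :
    AntitoneOn (fun x => x * deriv f x - f x) s := by
  intro x hx y hy hxy
  rcases hxy.eq_or_lt with rfl | hlt
  · exact le_rfl
  have hslope : deriv f y * (y - x) ≤ f y - f x := by
    have := hf.deriv_le_slope hx hy hlt (hd y hy)
    rwa [slope_def_field, le_div_iff₀ (sub_pos.2 hlt)] at this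
  have hderiv : deriv f y ≤ deriv f x := hf.antitoneOn_deriv hd hx hy hxy
  nlinarith [mul_le_mul_of_nonneg_left hderiv (hs hx)]

theorem ConvexOn.eq_mul_of_mul_deriv_eq {b : ℝ} (hf : ConvexOn ℝ (Icc 0 b) f) (hb : 0 < b)
    (h0 : f 0 = 0) (hd : DifferentiableAt ℝ f b) (hfb : b * deriv f b = f b) :
    ∀ x ∈ Icc 0 b, f x = deriv f b * x := by
  intro x ⟨hx0, hxb⟩
  rcases hx0.eq_or_lt with rfl | hx0
  · simp [h0]
  rcases hxb.eq_or_lt with rfl | hxb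
  · linarith
  have hb' : b ∈ Icc 0 b := right_mem_Icc.2 hb.le
  have hx : x ∈ Icc 0 b := ⟨hx0.le, hxb.le⟩
  -- the chord from the origin and the tangent at `b` have the same slope, which squeezes `f`
  have hchord : slope f b 0 ≤ slope f b x :=
    hf.slope_mono hb' ⟨left_mem_Icc.2 hb.le, hb.ne⟩ ⟨hx, hxb.ne⟩ hx0.le
  have htangent : slope f x b ≤ deriv f b := hf.slope_le_deriv hx hb' hxb hd
  have hchord_eq : slope f 0 b = deriv f b := by
    rw [slope_def_field, h0, sub_zero, sub_zero, ← hfb, mul_div_cancel_left₀ _ hb.ne']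
  rw [slope_comm f b 0, slope_comm f b x, hchord_eq] at hchord
  have hslope : slope f x b = deriv f b := le_antisymm htangent hchord
  rw [slope_def_field, div_eq_iff (sub_pos.2 hxb).ne'] at hslope
  linarith

theorem ConvexOn.deriv_eq_deriv_zero_of_mul_deriv_eq {b : ℝ} (hf : ConvexOn ℝ (Icc 0 b) f)
    (hb : 0 < b) (h0 : f 0 = 0) (hd0 : DifferentiableAt ℝ f 0) (hd : DifferentiableAt ℝ f b)
    (hfb : b * deriv f b = f b) : deriv f b = deriv f 0 := by
  have hlin : HasDerivWithinAt f (deriv f b) (Icc 0 b) 0 := by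
    have := ((hasDerivAt_id (0 : ℝ)).const_mul (deriv f b)).hasDerivWithinAt (s := Icc 0 b)
    rw [mul_one] at this
    exact this.congr_of_mem (hf.eq_mul_of_mul_deriv_eq hb h0 hd hfb) (left_mem_Icc.2 hb.le)
  exact (uniqueDiffOn_Icc hb 0 (left_mem_Icc.2 hb.le)).eq_deriv _ hlin
    hd0.hasDerivAt.hasDerivWithinAt

theorem deriv_pos_of_mul_one_sub_div_mul_deriv_eq {Γ γ : ℝ} (hγ : 0 < γ) (hγΓ : γ < Γ)
    (hfγ : 0 < f γ) (h : γ * (1 - γ / Γ) * deriv f γ = f γ) : 0 < deriv f γ := by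
  have hcoef : 0 < γ * (1 - γ / Γ) :=
    mul_pos hγ (sub_pos.2 ((div_lt_one (hγ.trans hγΓ)).2 hγΓ))
  rw [← h] at hfγ
  exact pos_of_mul_pos_right hfγ hcoef.le

theorem exists_mem_Ioo_mul_one_sub_div_mul_deriv_eq {Γ Γ' a : ℝ} (hf : Continuous f)
    (hf' : Continuous (deriv f)) (ha : 0 < a) (haΓ : a < Γ) (hΓΓ' : Γ < Γ') (hfa : 0 < f a)
    (hfΓ' : 0 < f Γ') (h : a * (1 - a / Γ) * deriv f a = f a) :
    ∃ c ∈ Ioo a Γ', c * (1 - c / Γ') * deriv f c = f c := by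
  set ψ : ℝ → ℝ := fun γ => γ * (1 - γ / Γ') * deriv f γ - f γ
  have hψ : Continuous ψ := by fun_prop
  have hψa : 0 < ψ a := by
    have hΓ : 0 < Γ := ha.trans haΓ
    have hdiv : a / Γ' < a / Γ := div_lt_div_of_pos_left ha hΓ hΓΓ'
    have hψa_eq : ψ a = a * (a / Γ - a / Γ') * deriv f a := by
      simp only [ψ]
      rw [← h]
      ring
    rw [hψa_eq]
    exact mul_pos (mul_pos ha (sub_pos.2 hdiv))
      (deriv_pos_of_mul_one_sub_div_mul_deriv_eq ha haΓ hfa h)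
  have hψΓ' : ψ Γ' < 0 := by
    simp only [ψ, div_self (ha.trans (haΓ.trans hΓΓ')).ne', sub_self, mul_zero, zero_mul]
    linarith
  obtain ⟨c, hc, hψc⟩ := intermediate_value_Ioo' (haΓ.trans hΓΓ').le hψ.continuousOn
    (⟨hψΓ', hψa⟩ : (0 : ℝ) ∈ Ioo (ψ Γ') (ψ a))
  exact ⟨c, hc, sub_eq_zero.1 hψc⟩

theorem equilibrium_sinr_monotone_bounded_general
    (f : ℝ → ℝ)
    (hC1 : ContDiff ℝ 1 f)
    (hmono : StrictMonoOn f (Ici 0))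
    (h0 : f 0 = 0) (hd0 : deriv f 0 = 0)
    (hS : ∃ γ₀ : ℝ, 0 < γ₀ ∧ ConvexOn ℝ (Icc 0 γ₀) f ∧ ConcaveOn ℝ (Ici γ₀) f)
    (Γhat : ℝ → ℝ)
    (hsol : ∀ Γ : ℝ, 0 < Γ → 0 < Γhat Γ ∧ Γhat Γ < Γ ∧
      Γhat Γ * (1 - Γhat Γ / Γ) * deriv f (Γhat Γ) = f (Γhat Γ))
    (huniq : ∀ Γ : ℝ, 0 < Γ → ∀ γ : ℝ, 0 < γ → γ < Γ →
      γ * (1 - γ / Γ) * deriv f γ = f γ → γ = Γhat Γ)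
    (γbar : ℝ) (hγbar : 0 < γbar)
    (hγbareq : γbar * deriv f γbar = f γbar) :
    MonotoneOn Γhat (Ioi 0) ∧ ∀ Γ : ℝ, 0 < Γ → Γhat Γ ≤ γbar := by
  obtain ⟨γ₀, hγ₀, hconv, hconc⟩ := hS
  have hdiff : Differentiable ℝ f := hC1.differentiable one_ne_zero
  have hfpos : ∀ γ, 0 < γ → 0 < f γ := fun γ hγ =>
    h0 ▸ hmono self_mem_Ici (mem_Ici.2 hγ.le) hγ
  have hγ₀γbar : γ₀ < γbar := by
    by_contra! h
    have hconv' : ConvexOn ℝ (Icc 0 γbar) f :=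
      hconv.subset (Icc_subset_Icc_right h) (convex_Icc 0 γbar)
    have hderiv :=
      hconv'.deriv_eq_deriv_zero_of_mul_deriv_eq hγbar h0 (hdiff 0) (hdiff γbar) hγbareq
    have hfγbar : f γbar = 0 := by rw [← hγbareq, hderiv, hd0, mul_zero]
    exact (hfpos γbar hγbar).ne' hfγbar
  refine ⟨fun Γ₁ hΓ₁ Γ₂ hΓ₂ hΓ₁₂ => ?_, fun Γ hΓ => ?_⟩
  · rcases hΓ₁₂.eq_or_lt with rfl | hlt
    · exact le_rfl
    obtain ⟨ha, haΓ₁, ha_eq⟩ := hsol Γ₁ hΓ₁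
    obtain ⟨c, ⟨hac, hcΓ₂⟩, hc_eq⟩ := exists_mem_Ioo_mul_one_sub_div_mul_deriv_eq
      hdiff.continuous (hC1.continuous_deriv le_rfl) ha haΓ₁ hlt (hfpos _ ha) (hfpos Γ₂ hΓ₂) ha_eq
    rw [← huniq Γ₂ hΓ₂ c (ha.trans hac) hcΓ₂ hc_eq]
    exact hac.le
  · obtain ⟨ha, haΓ, ha_eq⟩ := hsol Γ hΓ
    by_contra! hlt
    have hgap : 0 < Γhat Γ * deriv f (Γhat Γ) - f (Γhat Γ) := by
      have := mul_pos (mul_pos ha (div_pos ha hΓ))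
        (deriv_pos_of_mul_one_sub_div_mul_deriv_eq ha haΓ (hfpos _ ha) ha_eq)
      linarith
    have hanti : Γhat Γ * deriv f (Γhat Γ) - f (Γhat Γ) ≤ γbar * deriv f γbar - f γbar :=
      hconc.antitoneOn_mul_deriv_sub (Ici_subset_Ici.2 hγ₀.le) (fun x _ => hdiff x)
        (mem_Ici.2 hγ₀γbar.le) (mem_Ici.2 (hγ₀γbar.trans hlt).le) hlt.le
    linarith

/-- Monotonicity and boundedness of the equilibrium-SINR map: if `Γ̂ Γ` is,
for each `Γ > 0`, the (unique) solution in `(0, Γ)` of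
`γ (1 - γ/Γ) f'(γ) = f γ`, then `Γ̂` is monotonically increasing on `(0, ∞)`
and `Γ̂ Γ ≤ γ̄*`, where `γ̄* > 0` solves `γ f'(γ) = f γ` (the `Γ = ∞` case). -/
theorem equilibrium_sinr_monotone_bounded
    (f : ℝ → ℝ)
    (hC1 : ContDiff ℝ 1 f)
    (hmono : StrictMonoOn f (Ici 0))
    (h0 : f 0 = 0) (hd0 : deriv f 0 = 0)
    (hlim : Tendsto f atTop (nhds 1))
    (hS : ∃ γ₀ : ℝ, 0 < γ₀ ∧ ConvexOn ℝ (Icc 0 γ₀) f ∧ ConcaveOn ℝ (Ici γ₀) f)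
    (Γhat : ℝ → ℝ)
    (hsol : ∀ Γ : ℝ, 0 < Γ → 0 < Γhat Γ ∧ Γhat Γ < Γ ∧
      Γhat Γ * (1 - Γhat Γ / Γ) * deriv f (Γhat Γ) = f (Γhat Γ))
    (huniq : ∀ Γ : ℝ, 0 < Γ → ∀ γ : ℝ, 0 < γ → γ < Γ →
      γ * (1 - γ / Γ) * deriv f γ = f γ → γ = Γhat Γ)
    (γbar : ℝ) (hγbar : 0 < γbar)
    (hγbareq : γbar * deriv f γbar = f γbar) :
    MonotoneOn Γhat (Ioi 0) ∧ ∀ Γ : ℝ, 0 < Γ → Γhat Γ ≤ γbar :=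
  equilibrium_sinr_monotone_bounded_general f hC1 hmono h0 hd0 hS Γhat hsol huniq γbar hγbar hγbareq
end

section
/- Let g : (0,∞) → (0,∞) be defined by g(γ) = γ/(C - γ) for γ ∈ (0, C) with C > 0 (and extend monotonically). Suppose two power vectors p, p' are both Nash equilibria of a game where each best response has the form BR_k(p_{-k}) = min(p_max, c_k · (Σ_{j≠k} h_{kj} p_j + σ²)) with constants c_k > 0, h_{kj} ≥ 0, σ² > 0. Then the best response map p ↦ (BR_1(p_{-1}), …, BR_K(p_{-K})) is a standard interference function (positive, monotone, and scalable: BR(μp) < μ·BR(p) for μ > 1 componentwise), and hence has at most one fixed point. -/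
/-!
Each best response `min(p_max, c_k (∑_{j≠k} h_{kj} p_j + σ²))` is built from a positive constant and
an affine interference with positive noise by positive scaling and `min`, and all of these are
standard interference functions in the sense of Yates. For two fixed points `p, q` of a standard
`I`, let `μ = max_j q_j / p_j`; if `μ > 1`, then at a maximising index `q_k = I(q)_k ≤ I(μ p)_k <
μ I(p)_k = μ p_k = q_k`, a contradiction. Hence `q ≤ p`, and by symmetry `p = q`.
-/

open Finset

variable {ι : Type*}

/-- Yates' standard interference functions, on nonnegative power vectors. -/
structure IsStandardInterference (I : (ι → ℝ) → ι → ℝ) : Prop where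
  pos : ∀ p, 0 ≤ p → ∀ k, 0 < I p k
  mono : ∀ p q, 0 ≤ p → p ≤ q → I p ≤ I q
  scalable : ∀ μ : ℝ, 1 < μ → ∀ p, 0 ≤ p → ∀ k, I (μ • p) k < μ * I p k

namespace IsStandardInterference

theorem const {a : ι → ℝ} (ha : ∀ k, 0 < a k) :
    IsStandardInterference fun (_ : ι → ℝ) k => a k where
  pos _ _ := ha
  mono _ _ _ _ := le_rfl
  scalable _ hμ _ _ k := lt_mul_left (ha k) hμ

theorem affine {s : ι → Finset ι} {h : ι → ι → ℝ} (hh : ∀ k, ∀ j ∈ s k, 0 ≤ h k j)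
    {σ : ι → ℝ} (hσ : ∀ k, 0 < σ k) :
    IsStandardInterference fun p k => ∑ j ∈ s k, h k j * p j + σ k := by
  have sum_nonneg {p : ι → ℝ} (hp : 0 ≤ p) (k : ι) : 0 ≤ ∑ j ∈ s k, h k j * p j :=
    sum_nonneg fun j hj => mul_nonneg (hh k j hj) (hp j)
  refine ⟨fun p hp k => add_pos_of_nonneg_of_pos (sum_nonneg hp k) (hσ k), ?_, ?_⟩
  · intro p q _ hpq k
    dsimp only
    gcongr with j hj
    · exact hh k j hj
    · exact hpq j
  · intro μ hμ p hp k
    have hsum : ∑ j ∈ s k, h k j * (μ • p) j = μ * ∑ j ∈ s k, h k j * p j := by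
      simp only [Pi.smul_apply, smul_eq_mul, mul_sum, mul_left_comm]
    rw [hsum, mul_add]
    exact add_lt_add_right (lt_mul_left (hσ k) hμ) _

theorem const_mul {I : (ι → ℝ) → ι → ℝ} (hI : IsStandardInterference I) {c : ι → ℝ}
    (hc : ∀ k, 0 < c k) : IsStandardInterference fun p k => c k * I p k where
  pos p hp k := mul_pos (hc k) (hI.pos p hp k)
  mono p q hp hpq k := mul_le_mul_of_nonneg_left (hI.mono p q hp hpq k) (hc k).le
  scalable μ hμ p hp k := by
    rw [mul_left_comm]
    exact mul_lt_mul_of_pos_left (hI.scalable μ hμ p hp k) (hc k)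

theorem min {I J : (ι → ℝ) → ι → ℝ} (hI : IsStandardInterference I)
    (hJ : IsStandardInterference J) : IsStandardInterference fun p k => min (I p k) (J p k) where
  pos p hp k := lt_min (hI.pos p hp k) (hJ.pos p hp k)
  mono p q hp hpq k := min_le_min (hI.mono p q hp hpq k) (hJ.mono p q hp hpq k)
  scalable μ hμ p hp k := by
    rw [mul_min_of_nonneg _ _ (zero_le_one.trans hμ.le)]
    exact lt_min ((min_le_left _ _).trans_lt (hI.scalable μ hμ p hp k))
      ((min_le_right _ _).trans_lt (hJ.scalable μ hμ p hp k))

theorem le_of_isFixedPt [Finite ι] {I : (ι → ℝ) → ι → ℝ} (hI : IsStandardInterference I)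
    {p q : ι → ℝ} (hp : 0 ≤ p) (hq : 0 ≤ q) (hIp : I p = p) (hIq : I q = q) : q ≤ p := by
  by_contra hqp
  obtain ⟨k, hk⟩ : ∃ k, p k < q k := by simpa [Pi.le_def] using hqp
  have : Nonempty ι := ⟨k⟩
  have p_pos (j : ι) : 0 < p j := hIp ▸ hI.pos p hp j
  obtain ⟨m, hm⟩ := Finite.exists_max fun j => q j / p j
  set μ := q m / p m
  have hμ : 1 < μ := (one_lt_div (p_pos k)).2 hk |>.trans_le (hm k)
  have hqμp : q ≤ μ • p := fun j => by
    simpa [div_le_iff₀ (p_pos j), mul_comm] using hm j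
  have : q m < q m :=
    calc q m = I q m := by rw [hIq]
      _ ≤ I (μ • p) m := hI.mono q (μ • p) hq hqμp m
      _ < μ * I p m := hI.scalable μ hμ p hp m
      _ = q m := by rw [hIp, div_mul_cancel₀ _ (p_pos m).ne']
  exact this.false

theorem fixedPt_unique [Finite ι] {I : (ι → ℝ) → ι → ℝ} (hI : IsStandardInterference I)
    {p q : ι → ℝ} (hp : 0 ≤ p) (hq : 0 ≤ q) (hIp : I p = p) (hIq : I q = q) : p = q :=
  le_antisymm (hI.le_of_isFixedPt hq hp hIq hIp) (hI.le_of_isFixedPt hp hq hIp hIq)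

end IsStandardInterference

theorem best_response_standard_unique_general
    (K : ℕ)
    (pmax σ2 : ℝ) (hpmax : 0 < pmax) (hσ : 0 < σ2)
    (c : Fin K → ℝ) (hc : ∀ k, 0 < c k)
    (h : Fin K → Fin K → ℝ) (hh : ∀ k j, j ≠ k → 0 ≤ h k j)
    (BR : (Fin K → ℝ) → Fin K → ℝ)
    (hBR : ∀ p k, BR p k =
      min pmax (c k * ((∑ j ∈ Finset.univ.erase k, h k j * p j) + σ2))) :
    (∀ p : Fin K → ℝ, (∀ j, 0 ≤ p j) → ∀ k, 0 < BR p k) ∧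
    (∀ p q : Fin K → ℝ, (∀ j, 0 ≤ p j) → (∀ j, p j ≤ q j) →
      ∀ k, BR p k ≤ BR q k) ∧
    (∀ μ : ℝ, 1 < μ → ∀ p : Fin K → ℝ, (∀ j, 0 ≤ p j) →
      ∀ k, BR (fun j => μ * p j) k < μ * BR p k) ∧
    (∀ p p' : Fin K → ℝ, (∀ j, 0 ≤ p j) → (∀ j, 0 ≤ p' j) →
      (∀ k, p k = BR p k) → (∀ k, p' k = BR p' k) → p = p') := by
  have hstd : IsStandardInterference BR := by
    rw [show BR = _ from funext₂ hBR]
    have interference := IsStandardInterference.affine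
      (s := fun k => univ.erase k) (fun k j hj => hh k j (mem_erase.1 hj).1) fun _ => hσ
    exact (IsStandardInterference.const fun _ => hpmax).min (interference.const_mul hc)
  exact ⟨hstd.pos, hstd.mono, hstd.scalable, fun p p' hp hp' hfp hfp' =>
    hstd.fixedPt_unique hp hp' (funext hfp).symm (funext hfp').symm⟩

/-- The best-response map `BR_k(p) = min(p_max, c_k (∑_{j≠k} h_{kj} p_j + σ²))`
is a standard interference function on nonnegative power vectors — positive,
monotone, and scalable (`BR(μ p) < μ BR(p)` componentwise for `μ > 1`) — and
consequently it has at most one (nonnegative) fixed point, i.e. the Nash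
equilibrium is unique. -/
theorem best_response_standard_unique
    (K : ℕ) (hK : 1 ≤ K)
    (pmax σ2 : ℝ) (hpmax : 0 < pmax) (hσ : 0 < σ2)
    (c : Fin K → ℝ) (hc : ∀ k, 0 < c k)
    (h : Fin K → Fin K → ℝ) (hh : ∀ k j, j ≠ k → 0 ≤ h k j)
    (BR : (Fin K → ℝ) → Fin K → ℝ)
    (hBR : ∀ p k, BR p k =
      min pmax (c k * ((∑ j ∈ Finset.univ.erase k, h k j * p j) + σ2))) :
    (∀ p : Fin K → ℝ, (∀ j, 0 ≤ p j) → ∀ k, 0 < BR p k) ∧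
    (∀ p q : Fin K → ℝ, (∀ j, 0 ≤ p j) → (∀ j, p j ≤ q j) →
      ∀ k, BR p k ≤ BR q k) ∧
    (∀ μ : ℝ, 1 < μ → ∀ p : Fin K → ℝ, (∀ j, 0 ≤ p j) →
      ∀ k, BR (fun j => μ * p j) k < μ * BR p k) ∧
    (∀ p p' : Fin K → ℝ, (∀ j, 0 ≤ p j) → (∀ j, 0 ≤ p' j) →
      (∀ k, p k = BR p k) → (∀ k, p' k = BR p' k) → p = p') :=
  best_response_standard_unique_general K pmax σ2 hpmax hσ c hc h hh BR hBR
end
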